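/- arXiv:2509.25606 — 7 statements merged into one kernel-verified Lean document; each statement's English description precedes it below -/
import Mathlib

section
/- Let N ≥ 3 be a natural number and let ν be a natural number with 2 ≤ ν ≤ N−1. Then the infimum of φ_ν(ω) = ∑_{i=1}^{ν} ω_i over all ω in the set A_ν = {ω ∈ Δ̃ : ν ≤ (∑_{i=1}^{N} ω_i²)^{-1} < ν+1} equals ν/N + ((N−ν)/N)·√((N−ν−1)/((ν+1)(N−1))). -/
open Finset

private lemma le_of_sq_le_sq' (a b : ℝ) (hb : 0 ≤ b) (h : a^2 ≤ b^2) : a ≤ b :=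
  le_of_pow_le_pow_left₀ two_ne_zero hb h

private lemma chord (k φ B E p M : ℝ) (hk : 1 ≤ k) (hBp : B ≤ p) (hpE : p ≤ E)
    (hB : (φ - k*B)^2 + 2*B*(φ - k*B) + k*B^2 + B*(1-φ) < M)
    (hE : (φ - k*E)^2 + 2*E*(φ - k*E) + k*E^2 + E*(1-φ) < M) :
    (φ - k*p)^2 + 2*p*(φ - k*p) + k*p^2 + p*(1-φ) < M := by
  rcases eq_or_lt_of_le hBp with rfl | hBp'
  · exact hB
  · have hEB : 0 < E - B := by linarith
    have t1 : 0 ≤ (E - p) * (M - ((φ - k*B)^2 + 2*B*(φ - k*B) + k*B^2 + B*(1-φ))) :=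
      mul_nonneg (by linarith) (by linarith)
    have t2 : 0 < (p - B) * (M - ((φ - k*E)^2 + 2*E*(φ - k*E) + k*E^2 + E*(1-φ))) :=
      mul_pos (by linarith) (by linarith)
    have t3 : 0 ≤ k*(k-1)*(E-p)*(p-B)*(E-B) := by
      have h1 : 0 ≤ k*(k-1) := mul_nonneg (by linarith) (by linarith)
      have h2 : 0 ≤ (E-p) := by linarith
      have h3 : 0 ≤ (p-B) := by linarith
      have := mul_nonneg (mul_nonneg (mul_nonneg h1 h2) h3) hEB.le
      linarith [this]
    have hid : (E-B)*(M - ((φ - k*p)^2 + 2*p*(φ - k*p) + k*p^2 + p*(1-φ)))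
        = (E - p) * (M - ((φ - k*B)^2 + 2*B*(φ - k*B) + k*B^2 + B*(1-φ)))
        + (p - B) * (M - ((φ - k*E)^2 + 2*E*(φ - k*E) + k*E^2 + E*(1-φ)))
        + k*(k-1)*(E-p)*(p-B)*(E-B) := by ring
    nlinarith [hid, t1, t2, t3, hEB]

private lemma poly_ineq (k d : ℝ) (hk : 2 ≤ k) (hd : 1 ≤ d) :
    (k+1)*(d+1)^2 ≤ k^2*d*(k+d) := by
  have hA : 0 ≤ (k+1)*((d-1)*(d+3)) :=
    mul_nonneg (by linarith) (mul_nonneg (by linarith) (by linarith))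
  have hB : 0 ≤ (d*(k+d))*((3*k+2)*(k-2)) :=
    mul_nonneg (mul_nonneg (by linarith) (by linarith))
      (mul_nonneg (by linarith) (by linarith))
  have hC : 0 ≤ 4*((k+1)*(d*(k-2))) := by
    have := mul_nonneg (by linarith : (0:ℝ) ≤ k+1)
      (mul_nonneg (by linarith : (0:ℝ) ≤ d) (by linarith : (0:ℝ) ≤ k-2))
    linarith
  nlinarith [hA, hB, hC]

private lemma endgame (n k φ p S s : ℝ) (hn : 3 ≤ n) (hk : 2 ≤ k) (hkn : k + 1 ≤ n)
    (hd : n - k - 1 = 0 ∨ 1 ≤ n - k - 1)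
    (hs0 : 0 ≤ s) (hs2 : s^2 = (n-k-1)/((k+1)*(n-1)))
    (hp1 : k*p ≤ φ) (hp2 : 1 - φ ≤ (n-k)*p)
    (hS1 : 1 < (k+1)*S)
    (hSf : S ≤ (φ - k*p)^2 + 2*p*(φ - k*p) + k*p^2 + p*(1-φ)) :
    k/n + ((n-k)/n)*s ≤ φ := by
  by_contra hcon
  push_neg at hcon
  have hn0 : (0:ℝ) < n := by linarith
  have hk0 : (0:ℝ) < k := by linarith
  have hk1 : (0:ℝ) < k + 1 := by linarith
  have hn1 : (0:ℝ) < n - 1 := by linarith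
  have hnk : (0:ℝ) < n - k := by linarith
  -- φ ≥ k/n
  have hφn : k ≤ n * φ := by
    linarith [mul_le_mul_of_nonneg_left hp2 hk0.le, mul_le_mul_of_nonneg_left hp1 hnk.le]
  have hcn : k/n + ((n-k)/n)*s = (k + (n-k)*s)/n := by ring
  have hφw : n * φ < k + (n-k)*s := by
    rw [hcn] at hcon
    have := (lt_div_iff₀ hn0).mp hcon
    linarith
  rcases hd with hd0 | hd1
  · -- ν = N-1 : s = 0, contradiction directly
    have hs2' : s^2 = 0 := by rw [hs2, hd0, zero_div]
    have hszero : s = 0 := by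
      exact pow_eq_zero_iff two_ne_zero |>.mp hs2'
    rw [hszero] at hφw
    linarith
  · -- main case
    have hs2' : s^2 * ((k+1)*(n-1)) = n - k - 1 := by
      rw [hs2]; field_simp
    have hspos : 0 < s := by
      rcases eq_or_lt_of_le hs0 with rfl | h
      · exfalso; simp at hs2'; linarith
      · exact h
    -- s ≤ k(n-k-1)/((k+1)(n-k)), in product form
    have hsR : (k+1)*(n-k)*s ≤ k*(n-k-1) := by
      apply le_of_sq_le_sq'
      · exact mul_nonneg hk0.le (by linarith)
      have key : ((k+1)*(n-k)*s)^2 * ((k+1)*(n-1)) = (k+1)^2*(n-k)^2*(n-k-1) := by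
        linear_combination ((k+1)^2*(n-k)^2) * hs2'
      have hpoly : (k+1)^2*(n-k)^2*(n-k-1) ≤ (k*(n-k-1))^2 * ((k+1)*(n-1)) := by
        have h0 : (k+1)*(n-k)^2 ≤ k^2*(n-k-1)*(n-1) := by
          have := poly_ineq k (n-k-1) hk hd1
          linarith [this]
        have h1 := mul_le_mul_of_nonneg_left h0
          (mul_nonneg hk1.le (by linarith : (0:ℝ) ≤ n-k-1))
        linarith [h1]
      have hmul : ((k+1)*(n-k)*s)^2 * ((k+1)*(n-1)) ≤ (k*(n-k-1))^2 * ((k+1)*(n-1)) := by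
        rw [key]; exact hpoly
      exact le_of_mul_le_mul_right hmul (mul_pos hk1 hn1)
    -- (k+1)c ≤ k
    have hkc : (k+1) * (k + (n-k)*s) ≤ k * n := by linarith [hsR]
    -- bounds on p
    set B := (1-φ)/(n-k) with hBdef
    set E := φ/k with hEdef
    have hpB : B ≤ p := by rw [hBdef, div_le_iff₀ hnk]; linarith
    have hpE : p ≤ E := by rw [hEdef, le_div_iff₀ hk0]; linarith
    -- value at E
    have hFE : (φ - k*E)^2 + 2*E*(φ - k*E) + k*E^2 + E*(1-φ) = φ/k := by
      rw [hEdef]; field_simp; ring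
    have hFE_lt : (φ - k*E)^2 + 2*E*(φ - k*E) + k*E^2 + E*(1-φ) < 1/(k+1) := by
      rw [hFE, div_lt_div_iff₀ hk0 hk1]
      nlinarith [hφw, hkc, hn0, mul_lt_mul_of_pos_left hφw hk1]
    -- value at B
    have hG2 : (n-k)^2 * ((φ - k*B)^2 + 2*B*(φ - k*B) + k*B^2 + B*(1-φ))
        = (φ*(n-1)-(k-1))^2 + (n-1)*(1-φ)^2 := by
      rw [hBdef]; field_simp; ring
    have h1 : (n*φ - k)^2 < ((n-k)*s)^2 := by
      have ha : 0 ≤ n*φ - k := by linarith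
      have hb : n*φ - k < (n-k)*s := by linarith
      have := mul_self_lt_mul_self ha hb
      linarith [this]
    have hFB_lt : (φ - k*B)^2 + 2*B*(φ - k*B) + k*B^2 + B*(1-φ) < 1/(k+1) := by
      rw [lt_div_iff₀ hk1]
      have e3 : ((φ - k*B)^2 + 2*B*(φ - k*B) + k*B^2 + B*(1-φ)) * (k+1) * (n*(n-k)^2)
          = (k+1) * n * ((φ*(n-1)-(k-1))^2 + (n-1)*(1-φ)^2) := by
        linear_combination ((k+1)*n) * hG2
      have h5 : (k+1)*(n-1)*((n*φ-k)^2) < (k+1)*(n-1)*(((n-k)*s)^2) :=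
        mul_lt_mul_of_pos_left h1 (by positivity)
      have h6 : (n-k)^2*(s^2*((k+1)*(n-1))) = (n-k)^2*(n-k-1) := by rw [hs2']
      -- (k+1) n G2 = (k+1)((n-1)(nφ-k)² + (n-k)²) < (n-k)²(n-k-1) + (k+1)(n-k)² = n(n-k)²
      have h7 : (k+1) * n * ((φ*(n-1)-(k-1))^2 + (n-1)*(1-φ)^2) < n*(n-k)^2 := by
        linarith [h5, h6]
      have h8 : ((φ - k*B)^2 + 2*B*(φ - k*B) + k*B^2 + B*(1-φ)) * (k+1) * (n*(n-k)^2)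
          < 1 * (n*(n-k)^2) := by rw [e3]; linarith
      have := lt_of_mul_lt_mul_right h8 (by positivity : (0:ℝ) ≤ n*(n-k)^2)
      linarith
    have hfinal := chord k φ B E p (1/(k+1)) (by linarith) hpB hpE hFB_lt hFE_lt
    have : S < 1/(k+1) := lt_of_le_of_lt hSf hfinal
    rw [lt_div_iff₀ hk1] at this
    linarith


private lemma card_filter_lt_fin (N ν : ℕ) (h : ν ≤ N) :
    (univ.filter (fun i : Fin N => (i : ℕ) < ν)).card = ν := by
  rw [Finset.card_filter]
  rw [Fin.sum_univ_eq_sum_range (fun j => if j < ν then (1:ℕ) else 0)]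
  rw [← Finset.sum_filter]
  have : (Finset.range N).filter (· < ν) = Finset.range ν := by
    ext x; simp only [Finset.mem_filter, Finset.mem_range]; omega
  rw [this]
  simp

private lemma sum_ite_univ (N : ℕ) [NeZero N] (a b : ℝ) :
    ∑ i : Fin N, (if i = 0 then a else b) = a + ((N:ℝ)-1)*b := by
  rw [← Finset.add_sum_erase univ _ (mem_univ (0 : Fin N))]
  simp only [if_pos rfl]
  congr 1
  rw [Finset.sum_congr rfl (fun i hi => if_neg (Finset.ne_of_mem_erase hi)),
    Finset.sum_const, Finset.card_erase_of_mem (mem_univ _), card_univ, Fintype.card_fin,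
    nsmul_eq_mul]
  have hN : 1 ≤ N := Nat.one_le_iff_ne_zero.mpr (NeZero.ne N)
  rw [Nat.cast_sub hN]
  norm_num

private lemma sum_ite_filter (N ν : ℕ) [NeZero N] (hν : 1 ≤ ν) (hνN : ν ≤ N) (a b : ℝ) :
    ∑ i ∈ univ.filter (fun i : Fin N => (i : ℕ) < ν), (if i = 0 then a else b)
      = a + ((ν:ℝ)-1)*b := by
  have h0 : (0 : Fin N) ∈ univ.filter (fun i : Fin N => (i : ℕ) < ν) := by
    simp only [Finset.mem_filter, mem_univ, true_and]
    have : ((0 : Fin N) : ℕ) = 0 := rfl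
    omega
  rw [← Finset.add_sum_erase _ _ h0]
  simp only [if_pos rfl]
  congr 1
  rw [Finset.sum_congr rfl (fun i hi => if_neg (Finset.ne_of_mem_erase hi)),
    Finset.sum_const, Finset.card_erase_of_mem h0, card_filter_lt_fin N ν hνN,
    nsmul_eq_mul, Nat.cast_sub hν]
  norm_num


private lemma witness_reals (n k s ε : ℝ) (hn3 : 3 ≤ n) (hk2 : 2 ≤ k) (hkn : k+1 ≤ n)
    (hs0 : 0 ≤ s) (hs2 : s^2 = (n-k-1)/((k+1)*(n-1))) (hε : 0 < ε) :
    ∃ a b : ℝ, 0 ≤ b ∧ b ≤ a ∧ a + (n-1)*b = 1 ∧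
      k * (a^2 + (n-1)*b^2) ≤ 1 ∧ 1 < (k+1) * (a^2 + (n-1)*b^2) ∧
      a + (k-1)*b ≤ k/n + ((n-k)/n)*s + ε := by
  have hn0 : (0:ℝ) < n := by linarith
  have hk0 : (0:ℝ) < k := by linarith
  have hn1 : (0:ℝ) < n - 1 := by linarith
  have hnk : (0:ℝ) < n - k := by linarith
  have hk1 : (0:ℝ) < k + 1 := by linarith
  have hx0 : 0 ≤ (n - k - 1) / ((k+1)*(n-1)) :=
    div_nonneg (by linarith) (mul_pos hk1 hn1).le
  set q : ℝ := ((n - k - 1) / ((k+1)*(n-1))) / n^2 with hqdef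
  set P : ℝ := (n-k) / (k*n^2*(n-1)) with hPdef
  have hq0 : 0 ≤ q := div_nonneg hx0 (by positivity)
  have hqP : q < P := by
    have hbase : (n-k-1)*k < (n-k)*(k+1) := by nlinarith
    rw [hqdef, hPdef, div_div,
      div_lt_div_iff₀ (mul_pos (mul_pos hk1 hn1) (pow_pos hn0 2))
        (mul_pos (mul_pos hk0 (pow_pos hn0 2)) hn1)]
    nlinarith [mul_lt_mul_of_pos_right hbase (mul_pos (pow_pos hn0 2) hn1)]
  set δ : ℝ := min (P - q) ((ε/(n-k))^2) with hδdef
  have hδ0 : 0 < δ := lt_min (by linarith) (pow_pos (div_pos hε hnk) 2)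
  have hδP : q + δ ≤ P := by
    have := min_le_left (P - q) ((ε/(n-k))^2)
    rw [← hδdef] at this
    linarith
  set t : ℝ := Real.sqrt (q + δ) with htdef
  have ht2 : t ^ 2 = q + δ := Real.sq_sqrt (by linarith)
  have ht0 : 0 < t := Real.sqrt_pos.mpr (by linarith)
  have htq : s / n < t := by
    apply lt_of_pow_lt_pow_left₀ 2 ht0.le
    rw [ht2, div_pow, hs2, ← hqdef]
    linarith
  have htub : t ≤ s / n + ε / (n - k) := by
    apply le_of_sq_le_sq'
    · exact add_nonneg (div_nonneg hs0 hn0.le) (div_nonneg hε.le hnk.le)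
    rw [ht2]
    have h1 : δ ≤ (ε/(n-k))^2 := by
      have := min_le_right (P - q) ((ε/(n-k))^2)
      rw [← hδdef] at this; exact this
    have h2 : q = (s/n)^2 := by rw [div_pow, hs2, hqdef]
    have h3 : (s/n + ε/(n-k))^2 = (s/n)^2 + 2*((s/n)*(ε/(n-k))) + (ε/(n-k))^2 := by
      ring
    have h4 : 0 ≤ (s/n)*(ε/(n-k)) :=
      mul_nonneg (div_nonneg hs0 hn0.le) (div_nonneg hε.le hnk.le)
    rw [h3]
    linarith [h1, h2, h4]
  have ht1n : t ≤ 1 / n := by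
    apply le_of_sq_le_sq'
    · exact (div_pos one_pos hn0).le
    rw [ht2, div_pow, one_pow]
    have hP1 : P ≤ 1 / n^2 := by
      rw [hPdef, div_le_div_iff₀ (mul_pos (mul_pos hk0 (pow_pos hn0 2)) hn1)
        (pow_pos hn0 2)]
      have h5 : 2*n^3 ≤ k*n^3 := mul_le_mul_of_nonneg_right hk2 (by positivity)
      nlinarith [h5, pow_nonneg hn0.le 3]
    linarith
  clear_value q P δ t
  have hSval : (1/n + (n-1)*t)^2 + (n-1)*(1/n - t)^2 = 1/n + n*(n-1)*(q+δ) := by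
    rw [← ht2]; field_simp; ring
  refine ⟨1/n + (n-1)*t, 1/n - t, by linarith, ?_, ?_, ?_, ?_, ?_⟩
  · linarith [mul_nonneg hn1.le ht0.le]
  · field_simp; ring
  · -- k * S ≤ 1 where S = a² + (n-1)b² = 1/n + n(n-1)t²
    rw [hSval]
    have h1 : k*(1/n + n*(n-1)*P) = 1 := by
      rw [hPdef]; field_simp; ring
    have h2 : n*(n-1)*(q+δ) ≤ n*(n-1)*P :=
      mul_le_mul_of_nonneg_left hδP (mul_pos hn0 hn1).le
    have h3 := mul_le_mul_of_nonneg_left h2 hk0.le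
    linarith [h1, h3]
  · rw [hSval]
    have h1 : (k+1)*(1/n + n*(n-1)*q) = 1 := by
      rw [hqdef]; field_simp; ring
    have h2 : 0 < (k+1)*(n*(n-1)*δ) := mul_pos hk1 (mul_pos (mul_pos hn0 hn1) hδ0)
    linarith [h1, h2]
  · -- φ = a + (k-1)b = k/n + (n-k)t ≤ c + ε
    have hφ : 1/n + (n-1)*t + (k-1)*(1/n - t) = k/n + (n-k)*t := by
      field_simp; ring
    rw [hφ]
    have h3 : (n-k)*t ≤ (n-k)*(s/n + ε/(n-k)) :=
      mul_le_mul_of_nonneg_left htub hnk.le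
    have h4 : (n-k)*(s/n + ε/(n-k)) = (n-k)/n*s + ε := by
      field_simp
    linarith [h3, h4.le, h4.ge]

/-- For `3 ≤ N` and `2 ≤ ν ≤ N - 1`, the infimum of
`φ_ν(ω) = ∑_{i=1}^{ν} ω_i` over
`A_ν = {ω ∈ Δ̃ : ν ≤ (∑ ω_i²)⁻¹ < ν + 1}` equals
`ν/N + ((N-ν)/N)·√((N-ν-1)/((ν+1)(N-1)))`. -/
theorem emp_inf_phi_over_Anu (N : ℕ) (hN : 3 ≤ N) (ν : ℕ) (hν1 : 2 ≤ ν) (hν2 : ν ≤ N - 1) :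
    sInf ((fun ω : Fin N → ℝ => ∑ i ∈ univ.filter (fun i : Fin N => (i : ℕ) < ν), ω i) ''
        {ω : Fin N → ℝ |
          (∀ i, 0 ≤ ω i) ∧ (∑ i, ω i = 1) ∧ (∀ i j : Fin N, i ≤ j → ω j ≤ ω i) ∧
          (ν : ℝ) ≤ (∑ i, ω i ^ 2)⁻¹ ∧ (∑ i, ω i ^ 2)⁻¹ < (ν : ℝ) + 1}) =
      (ν : ℝ) / N + (((N : ℝ) - ν) / N) *
        Real.sqrt (((N : ℝ) - ν - 1) / (((ν : ℝ) + 1) * ((N : ℝ) - 1))) := by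
  haveI : NeZero N := ⟨by omega⟩
  have hνN' : ν + 1 ≤ N := by omega
  have hνN : ν ≤ N := by omega
  have hn3 : (3:ℝ) ≤ (N:ℝ) := by exact_mod_cast hN
  have hk2 : (2:ℝ) ≤ (ν:ℝ) := by exact_mod_cast hν1
  have hkn : (ν:ℝ) + 1 ≤ (N:ℝ) := by exact_mod_cast hνN'
  set n : ℝ := (N : ℝ) with hndef
  set k : ℝ := (ν : ℝ) with hkdef
  have hn0 : (0:ℝ) < n := by linarith
  have hk0 : (0:ℝ) < k := by linarith
  have hn1 : (0:ℝ) < n - 1 := by linarith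
  have hnk : (0:ℝ) < n - k := by linarith
  have hk1 : (0:ℝ) < k + 1 := by linarith
  have hx0 : 0 ≤ (n - k - 1) / ((k+1)*(n-1)) :=
    div_nonneg (by linarith) (mul_pos hk1 hn1).le
  set s : ℝ := Real.sqrt ((n - k - 1) / ((k+1)*(n-1))) with hsdef
  have hs0 : 0 ≤ s := Real.sqrt_nonneg _
  have hs2 : s ^ 2 = (n - k - 1) / ((k+1)*(n-1)) := Real.sq_sqrt hx0
  have hd : n - k - 1 = 0 ∨ 1 ≤ n - k - 1 := by
    rcases Nat.lt_or_ge (ν + 1) N with h | h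
    · right
      have : (ν:ℝ) + 2 ≤ (N:ℝ) := by exact_mod_cast (by omega : ν + 2 ≤ N)
      rw [hndef, hkdef]; linarith
    · left
      have hNe : N = ν + 1 := by omega
      have : (N:ℝ) = (ν:ℝ) + 1 := by exact_mod_cast hNe
      rw [hndef, hkdef]; linarith
  set c : ℝ := k/n + ((n-k)/n)*s with hcdef
  set A : Set ℝ := ((fun ω : Fin N → ℝ =>
      ∑ i ∈ univ.filter (fun i : Fin N => (i : ℕ) < ν), ω i) ''
      {ω : Fin N → ℝ |
        (∀ i, 0 ≤ ω i) ∧ (∑ i, ω i = 1) ∧ (∀ i j : Fin N, i ≤ j → ω j ≤ ω i) ∧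
        (ν : ℝ) ≤ (∑ i, ω i ^ 2)⁻¹ ∧ (∑ i, ω i ^ 2)⁻¹ < (ν : ℝ) + 1}) with hAdef
  -- LOWER BOUND
  have hlb : ∀ y ∈ A, c ≤ y := by
    rintro y ⟨ω, ⟨h0, h1, h2, h3, h4⟩, rfl⟩
    set T := univ.filter (fun i : Fin N => (i : ℕ) < ν) with hTdef
    set φ : ℝ := ∑ i ∈ T, ω i with hφdef
    set S : ℝ := ∑ i, ω i ^ 2 with hSdef
    have hTcard : T.card = ν := card_filter_lt_fin N ν hνN
    set ι : Fin N := ⟨ν - 1, by omega⟩ with hιdef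
    set p : ℝ := ω ι with hpdef
    have hSnn : 0 ≤ S := Finset.sum_nonneg (fun i _ => sq_nonneg _)
    have hSne : S ≠ 0 := by
      intro h
      rw [h] at h3
      simp at h3
      linarith
    have hS0 : 0 < S := lt_of_le_of_ne hSnn (Ne.symm hSne)
    have hS1 : 1 < (k + 1) * S := by
      have h4' : 1 / S < k + 1 := by rwa [one_div]
      exact (div_lt_iff₀ hS0).mp h4'
    -- p bounds
    have hmemT : ∀ i ∈ T, p ≤ ω i := by
      intro i hi
      apply h2 i ι
      rw [Fin.le_def]
      simp only [hTdef, Finset.mem_filter] at hi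
      simp only [hιdef]
      omega
    have hp1 : k * p ≤ φ := by
      have := Finset.sum_le_sum hmemT
      rw [Finset.sum_const, hTcard, nsmul_eq_mul] at this
      exact this
    set T' := univ.filter (fun i : Fin N => ¬ ((i : ℕ) < ν)) with hT'def
    have hsplit : ∀ f : Fin N → ℝ, ∑ i ∈ T, f i + ∑ i ∈ T', f i = ∑ i, f i := by
      intro f
      exact Finset.sum_filter_add_sum_filter_not univ _ f
    have hT'sum : ∑ i ∈ T', ω i = 1 - φ := by
      have := hsplit ω
      rw [h1] at this
      linarith
    have hT'card : T'.card = N - ν := by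
      have he : T' = univ \ T := by rw [hT'def, hTdef, Finset.filter_not]
      rw [he, Finset.card_sdiff_of_subset (Finset.subset_univ T), card_univ, Fintype.card_fin, hTcard]
    have hmemT' : ∀ i ∈ T', ω i ≤ p := by
      intro i hi
      apply h2 ι i
      rw [Fin.le_def]
      simp only [hT'def, Finset.mem_filter] at hi
      simp only [hιdef]
      omega
    have hp2 : 1 - φ ≤ (n - k) * p := by
      have := Finset.sum_le_sum hmemT'
      rw [Finset.sum_const, hT'card, nsmul_eq_mul, hT'sum] at this
      have hcast : ((N - ν : ℕ) : ℝ) = n - k := by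
        rw [Nat.cast_sub hνN]
      rw [hcast] at this
      exact this
    -- S ≤ F p
    have hSf : S ≤ (φ - k*p)^2 + 2*p*(φ - k*p) + k*p^2 + p*(1-φ) := by
      have hysum : ∑ i ∈ T, (ω i - p) = φ - k * p := by
        rw [Finset.sum_sub_distrib, Finset.sum_const, hTcard, nsmul_eq_mul]
      have hysq : ∑ i ∈ T, (ω i - p)^2 ≤ (φ - k*p)^2 := by
        have h := Finset.sum_sq_le_sq_sum_of_nonneg
          (f := fun i => ω i - p) (s := T) (fun i hi => sub_nonneg.mpr (hmemT i hi))
        rwa [hysum] at h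
      have hhead : ∑ i ∈ T, ω i ^ 2 = ∑ i ∈ T, (ω i - p)^2 + (2*p*φ - k*p^2) := by
        have e : ∀ i ∈ T, ω i ^ 2 = (ω i - p)^2 + (2*p*(ω i) - p^2) := by
          intro i _; ring
        rw [Finset.sum_congr rfl e, Finset.sum_add_distrib, Finset.sum_sub_distrib,
          ← Finset.mul_sum, Finset.sum_const, hTcard, nsmul_eq_mul, ← hφdef]
      have htail : ∑ i ∈ T', ω i ^ 2 ≤ p * (1 - φ) := by
        calc ∑ i ∈ T', ω i ^ 2 ≤ ∑ i ∈ T', p * ω i := by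
              apply Finset.sum_le_sum
              intro i hi
              rw [pow_two]
              exact mul_le_mul_of_nonneg_right (hmemT' i hi) (h0 i)
          _ = p * (1 - φ) := by rw [← Finset.mul_sum, hT'sum]
      have hsq := hsplit (fun i => ω i ^ 2)
      have : S ≤ (φ - k*p)^2 + (2*p*φ - k*p^2) + p*(1-φ) := by
        rw [hSdef]
        rw [← hsq, hhead]
        linarith [hysq, htail]
      linarith [this]
    exact endgame n k φ p S s hn3 hk2 hkn hd hs0 hs2 hp1 hp2 hS1 hSf
  -- WITNESS
  have hwit : ∀ ε : ℝ, 0 < ε → ∃ y ∈ A, y ≤ c + ε := by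
    intro ε hε
    obtain ⟨a, b, hb0, hba, hsum1, hkS, hk1S, hφbound⟩ :=
      witness_reals n k s ε hn3 hk2 hkn hs0 hs2 hε
    set ω : Fin N → ℝ := fun i => if i = 0 then a else b with hωdef
    have hωval : ∀ i : Fin N, ω i = if i = 0 then a else b := fun i => rfl
    have hmem0 : ∀ i, 0 ≤ ω i := by
      intro i
      rw [hωval i]
      split
      · linarith
      · exact hb0
    have hmem1 : ∑ i, ω i = 1 := by
      rw [hωdef, sum_ite_univ N a b, ← hndef]
      exact hsum1
    have hmem2 : ∀ i j : Fin N, i ≤ j → ω j ≤ ω i := by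
      intro i j hij
      rw [hωval i, hωval j]
      by_cases hi : i = 0
      · rw [if_pos hi]
        split
        · exact le_refl a
        · exact hba
      · rw [if_neg hi]
        have hj : j ≠ 0 := by
          intro hj0
          apply hi
          apply Fin.ext
          have h1 := Fin.le_def.mp hij
          have h2 : (j : ℕ) = ((0 : Fin N) : ℕ) := by rw [hj0]
          have h3 : ((0 : Fin N) : ℕ) = 0 := rfl
          omega
        rw [if_neg hj]
    have hSval : ∑ i, ω i ^ 2 = a^2 + (n-1)*b^2 := by
      have e : ∀ i : Fin N, ω i ^ 2 = if i = 0 then a^2 else b^2 := by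
        intro i
        rw [hωval i]
        split <;> rfl
      rw [Finset.sum_congr rfl (fun i _ => e i), sum_ite_univ N (a^2) (b^2), ← hndef]
    have hS0 : 0 < a^2 + (n-1)*b^2 := by nlinarith [hk1S, hk1]
    have hmem3 : (ν : ℝ) ≤ (∑ i, ω i ^ 2)⁻¹ := by
      rw [hSval, ← one_div, le_div_iff₀ hS0, ← hkdef]
      exact hkS
    have hmem4 : (∑ i, ω i ^ 2)⁻¹ < (ν : ℝ) + 1 := by
      rw [hSval, ← one_div, div_lt_iff₀ hS0, ← hkdef]
      linarith [hk1S]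
    refine ⟨∑ i ∈ univ.filter (fun i : Fin N => (i : ℕ) < ν), ω i, ⟨ω,
      ⟨hmem0, hmem1, hmem2, hmem3, hmem4⟩, rfl⟩, ?_⟩
    have hφval : ∑ i ∈ univ.filter (fun i : Fin N => (i : ℕ) < ν), ω i
        = a + (k-1)*b := by
      rw [hωdef, sum_ite_filter N ν (by omega) hνN a b, ← hkdef]
    rw [hφval, hcdef]
    linarith [hφbound]
  -- CONCLUSION
  clear_value c A
  have hne : A.Nonempty := by
    obtain ⟨y, hy, _⟩ := hwit 1 one_pos
    exact ⟨y, hy⟩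
  have hbdd : BddBelow A := ⟨c, fun y hy => hlb y hy⟩
  apply le_antisymm
  · by_contra hgt
    push_neg at hgt
    obtain ⟨y, hy, hyle⟩ := hwit ((sInf A - c)/2) (by linarith)
    have := csInf_le hbdd hy
    linarith
  · exact le_csInf hne hlb
end

section
/- Let N ≥ 2 be a natural number and let s ∈ ℝ^N be a nonzero vector. Define ω_i = |s_i| / ∑_{j=1}^{N} |s_j|, let N_eff = ⌊(∑_{i=1}^{N} ω_i²)^{-1}⌋, and let s_eff be the sum of the N_eff largest entries of ω. If 2 ≤ N_eff < N, then 1 − s_eff ≤ ((N − N_eff)/N) · (1 − √((N − N_eff − 1)/((N_eff + 1)(N − 1)))). -/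
/-!
Write `k = N_eff`, let `c` be the `(k+1)`-st largest weight and `T = 1 - s_eff` the tail mass.
The `k` head weights are `≥ c` and sum to `1 - T`, the tail weights lie in `[0, c]` and sum to `T`,
so `∑ ω² ≤ F(c)`: the head contributes at most as much as one large weight with the others equal
to `c`, the tail at most `c T`. `F` is a convex quadratic in `c` and `T/(N-k) ≤ c ≤ (1-T)/k`, so `F(c)` is at most
its value at an endpoint. At `c = (1-T)/k` that value is `c`, which is `≤ 1/(k+1)` as soon as
`T ≥ 1/(k+1)` (the claimed bound is itself `≥ 1/(k+1)`); at `c = T/(N-k)` it is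
`((N-1)(Nc-1)² + 1)/N`, which is `≤ 1/(k+1)` exactly when `|Nc - 1| ≤ ρ`, with `ρ` the square
root in the claim. So if `T` exceeded the claimed bound, `∑ ω² ≤ 1/(k+1)`, contradicting
`k = ⌊(∑ ω²)⁻¹⌋`.
-/

open Finset

theorem quadratic_le_of_mem_Icc {a b d u v x M : ℝ} (ha : 0 ≤ a) (hux : u ≤ x) (hxv : x ≤ v)
    (hu : a * u ^ 2 + b * u + d ≤ M) (hv : a * v ^ 2 + b * v + d ≤ M) :
    a * x ^ 2 + b * x + d ≤ M := by
  rcases hux.eq_or_lt with rfl | hux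
  · exact hu
  have hvx := sub_nonneg.2 hxv
  have hxu := sub_nonneg.2 hux.le
  refine le_of_mul_le_mul_left ?_ (sub_pos.2 (hux.trans_le hxv))
  nlinarith [mul_le_mul_of_nonneg_left hu hvx, mul_le_mul_of_nonneg_left hv hxu,
    mul_nonneg (mul_nonneg ha (add_nonneg hvx hxu)) (mul_nonneg hxu hvx)]

theorem one_lt_mul_floor_inv_add_one {Q : ℝ} (h : 0 < ⌊Q⁻¹⌋₊) : 1 < Q * (⌊Q⁻¹⌋₊ + 1) := by
  have hQ : 0 < Q := inv_pos.1 (one_pos.trans_le (Nat.floor_pos.1 h))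
  calc 1 = Q * Q⁻¹ := (mul_inv_cancel₀ hQ.ne').symm
    _ < Q * (⌊Q⁻¹⌋₊ + 1) := mul_lt_mul_of_pos_left (Nat.lt_floor_add_one _) hQ

section SumSq

variable {ι : Type*} {s : Finset ι} {f : ι → ℝ} {c : ℝ}

theorem sum_sq_le_mul_sum_of_le (h0 : ∀ i ∈ s, 0 ≤ f i) (hc : ∀ i ∈ s, f i ≤ c) :
    ∑ i ∈ s, f i ^ 2 ≤ c * ∑ i ∈ s, f i := by
  rw [mul_sum]
  exact sum_le_sum fun i hi => by nlinarith [h0 i hi, hc i hi]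

theorem sum_sq_le_of_le (hc : ∀ i ∈ s, c ≤ f i) :
    ∑ i ∈ s, f i ^ 2 ≤ (∑ i ∈ s, f i - #s * c) ^ 2 + 2 * c * ∑ i ∈ s, f i - #s * c ^ 2 := by
  have h := sum_sq_le_sq_sum_of_nonneg fun i hi => sub_nonneg.2 (hc i hi)
  have hsq : ∑ i ∈ s, (f i - c) ^ 2 = ∑ i ∈ s, f i ^ 2 - 2 * c * ∑ i ∈ s, f i + #s * c ^ 2 := by
    simp only [sub_sq, sum_add_distrib, sum_sub_distrib, sum_const, nsmul_eq_mul, ← sum_mul,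
      ← mul_sum]
    ring
  rw [sum_sub_distrib, sum_const, nsmul_eq_mul, hsq] at h
  linarith

end SumSq

/-- `(1 - T - (k - 1) c)² + (k - 1) c² + c T`, expanded in powers of `c`: the bound on `∑ ω²` when
the `k` largest weights are `≥ c` and sum to `1 - T`, and the others lie in `[0, c]` and sum to `T`. -/
def sqSumBound (k T c : ℝ) : ℝ := k * (k - 1) * c ^ 2 + (2 * (1 - T) * (1 - k) + T) * c + (1 - T) ^ 2

theorem sqSumBound_of_head_eq {k T c : ℝ} (h : 1 - T = k * c) : sqSumBound k T c = c := by
  rw [sqSumBound, show T = 1 - k * c by linarith]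
  ring

theorem sqSumBound_of_tail_eq {k N T c : ℝ} (h : T = (N - k) * c) :
    N * sqSumBound k T c = (N - 1) * (N * c - 1) ^ 2 + 1 := by
  rw [sqSumBound, h]
  ring

theorem sqSumBound_le_of_mem_Icc {k T u v c M : ℝ} (hk : 1 ≤ k) (huc : u ≤ c) (hcv : c ≤ v)
    (hu : sqSumBound k T u ≤ M) (hv : sqSumBound k T v ≤ M) : sqSumBound k T c ≤ M :=
  quadratic_le_of_mem_Icc (by nlinarith) huc hcv hu hv

noncomputable def tailThreshold (k N : ℝ) : ℝ :=
  (N - k) / N * (1 - √((N - k - 1) / ((k + 1) * (N - 1))))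

theorem sq_sqrt_ratio_mul {k N : ℝ} (hk : 0 < k) (hkN : k + 1 ≤ N) :
    √((N - k - 1) / ((k + 1) * (N - 1))) ^ 2 * ((k + 1) * (N - 1)) = N - k - 1 := by
  have hN : 0 < N - 1 := by linarith
  rw [Real.sq_sqrt (div_nonneg (by linarith) (by positivity))]
  field_simp

-- Integrality of `N - k` matters here: the claim fails for `0 < N - k - 1 < 1`.
theorem inv_succ_le_tailThreshold {k N : ℕ} (hk : 2 ≤ k) (hkN : k < N) :
    1 / ((k : ℝ) + 1) ≤ tailThreshold k N := by
  have hk' : (2 : ℝ) ≤ k := by exact_mod_cast hk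
  obtain ⟨m, hNm, hm⟩ : ∃ m : ℝ, (N : ℝ) = k + m + 1 ∧ (m = 0 ∨ 1 ≤ m) := by
    refine ⟨N - k - 1, by ring, ?_⟩
    rcases Nat.lt_or_ge (k + 1) N with h | h
    · right
      have : (k : ℝ) + 2 ≤ N := by exact_mod_cast h
      linarith
    · left
      rw [show N = k + 1 by omega]
      push_cast
      ring
  have hm0 : 0 ≤ m := by rcases hm with h | h <;> linarith
  have hρ := sq_sqrt_ratio_mul (k := k) (N := N) (by positivity) (by linarith)
  rw [tailThreshold]
  set ρ := √(((N : ℝ) - k - 1) / ((k + 1) * (N - 1)))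
  have hρ0 : 0 ≤ ρ := Real.sqrt_nonneg _
  clear_value ρ
  rw [hNm] at hρ ⊢
  have hρm : ρ * ((m + 1) * (k + 1)) ≤ k * m := by
    rcases hm with rfl | hm
    · have h0 : ρ ^ 2 * ((k + 1) * k) = 0 := by linear_combination hρ
      have : ρ ^ 2 = 0 := (mul_eq_zero.1 h0).resolve_right (by positivity)
      simp [pow_eq_zero_iff two_ne_zero |>.1 this]
    have hpoly : m * (m + 1) ^ 2 * (k + 1) ≤ (k * m) ^ 2 * (k + m) := by
      nlinarith [mul_nonneg (sub_nonneg.2 hk') (sub_nonneg.2 hm), sq_nonneg ((k : ℝ) - m),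
        mul_nonneg (mul_nonneg (sub_nonneg.2 hk') (sub_nonneg.2 hm)) (sub_nonneg.2 hm),
        mul_nonneg (mul_nonneg (sub_nonneg.2 hk') (sub_nonneg.2 hk')) (sub_nonneg.2 hm),
        mul_nonneg (mul_nonneg (sub_nonneg.2 hm) (sub_nonneg.2 hm)) (sub_nonneg.2 hm)]
    have hsq : (ρ * ((m + 1) * (k + 1))) ^ 2 * (k + m) = m * (m + 1) ^ 2 * (k + 1) := by
      linear_combination (m + 1) ^ 2 * (k + 1) * hρ
    rw [← sq_le_sq₀ (by positivity) (by positivity)]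
    exact le_of_mul_le_mul_right (hsq.trans_le hpoly) (by positivity)
  rw [div_mul_eq_mul_div, div_le_div_iff₀ (by positivity) (by positivity)]
  nlinarith

theorem sqSumBound_le_inv_succ {k N : ℕ} (hk : 2 ≤ k) (hkN : k < N) {T c : ℝ}
    (hhead : k * c ≤ 1 - T) (htail : T ≤ (N - k) * c) (hT : tailThreshold k N < T) :
    sqSumBound k T c ≤ 1 / (k + 1) := by
  have hk' : (2 : ℝ) ≤ k := by exact_mod_cast hk
  have hkN' : (k : ℝ) + 1 ≤ N := by exact_mod_cast hkN
  have hp : (0 : ℝ) < N - k := by linarith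
  have hTk : 1 ≤ T * (k + 1) := by
    rw [← div_le_iff₀ (by positivity)]
    exact (inv_succ_le_tailThreshold hk hkN).trans hT.le
  have hρ := sq_sqrt_ratio_mul (k := k) (N := N) (by positivity) hkN'
  rw [tailThreshold, div_mul_eq_mul_div, div_lt_iff₀ (by linarith)] at hT
  set ρ := √(((N : ℝ) - k - 1) / ((k + 1) * (N - 1)))
  have hNT : N * T ≤ N - k := by nlinarith
  refine sqSumBound_le_of_mem_Icc (u := T / (N - k)) (v := (1 - T) / k) (by linarith)
    ((div_le_iff₀ hp).2 (by linarith)) ((le_div_iff₀ (by positivity)).2 (by linarith)) ?_ ?_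
  · set u := T / (N - k)
    have hTu : T = (N - k) * u := (mul_div_cancel₀ T hp.ne').symm
    have hu : (N * u - 1) ^ 2 ≤ ρ ^ 2 := by
      rw [hTu] at hT hNT
      apply sq_le_sq'
      · nlinarith
      · nlinarith [Real.sqrt_nonneg (((N : ℝ) - k - 1) / ((k + 1) * (N - 1)))]
    rw [le_div_iff₀ (by positivity)]
    refine le_of_mul_le_mul_left ?_ (by linarith : (0 : ℝ) < N)
    have hρu := mul_le_mul_of_nonneg_left hu (by nlinarith : (0 : ℝ) ≤ (k + 1) * (N - 1))
    linear_combination (k + 1) * sqSumBound_of_tail_eq (k := (k : ℝ)) hTu + hρu + hρ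
  · rw [sqSumBound_of_head_eq (mul_div_cancel₀ _ (by positivity)).symm,
      div_le_div_iff₀ (by positivity) (by positivity)]
    linarith

section Sorted

variable {N k : ℕ} {x : Fin N → ℝ}

theorem Fin.card_filter_val_lt_of_le (hk : k ≤ N) : #{i : Fin N | (i : ℕ) < k} = k := by
  rw [Fin.card_filter_val_lt]
  omega

theorem sum_filter_val_lt_eq_one_sub (hsum : ∑ i, x i = 1) :
    ∑ i ∈ {i : Fin N | (i : ℕ) < k}, x i = 1 - ∑ i ∈ {i : Fin N | ¬ (i : ℕ) < k}, x i := by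
  rw [← hsum, ← sum_filter_add_sum_filter_not univ (fun i : Fin N => (i : ℕ) < k)]
  ring

theorem Antitone.mul_le_sum_head (hx : Antitone x) (hk : k < N) :
    k * x ⟨k, hk⟩ ≤ ∑ i ∈ {i : Fin N | (i : ℕ) < k}, x i :=
  calc (k : ℝ) * x ⟨k, hk⟩ = #{i : Fin N | (i : ℕ) < k} • x ⟨k, hk⟩ := by
        rw [Fin.card_filter_val_lt_of_le hk.le, nsmul_eq_mul]
    _ ≤ _ := card_nsmul_le_sum _ _ _ fun i hi => hx (Fin.le_def.2 (mem_filter.1 hi).2.le)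

theorem Antitone.sum_tail_le_mul (hx : Antitone x) (hk : k < N) :
    ∑ i ∈ {i : Fin N | ¬ (i : ℕ) < k}, x i ≤ (N - k) * x ⟨k, hk⟩ := by
  have hcard : #{i : Fin N | ¬ (i : ℕ) < k} = N - k := by
    rw [filter_not, card_sdiff_of_subset (filter_subset _ _), Fin.card_filter_val_lt_of_le hk.le,
      card_univ, Fintype.card_fin]
  calc _ ≤ #{i : Fin N | ¬ (i : ℕ) < k} • x ⟨k, hk⟩ :=
        sum_le_card_nsmul _ _ _ fun i hi => hx (Fin.le_def.2 (not_lt.1 (mem_filter.1 hi).2))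
    _ = (N - k) * x ⟨k, hk⟩ := by rw [hcard, nsmul_eq_mul, Nat.cast_sub hk.le]

theorem Antitone.sum_sq_le_sqSumBound (hx : Antitone x) (hx0 : ∀ i, 0 ≤ x i)
    (hsum : ∑ i, x i = 1) (hk : k < N) :
    ∑ i, x i ^ 2 ≤ sqSumBound k (∑ i ∈ {i : Fin N | ¬ (i : ℕ) < k}, x i) (x ⟨k, hk⟩) := by
  have hhead := sum_sq_le_of_le (s := {i : Fin N | (i : ℕ) < k}) (f := x) (c := x ⟨k, hk⟩)
    fun i hi => hx (Fin.le_def.2 (mem_filter.1 hi).2.le)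
  have htail := sum_sq_le_mul_sum_of_le (s := {i : Fin N | ¬ (i : ℕ) < k}) (c := x ⟨k, hk⟩)
    (fun i _ => hx0 i) fun i hi => hx (Fin.le_def.2 (not_lt.1 (mem_filter.1 hi).2))
  rw [sum_filter_val_lt_eq_one_sub hsum, Fin.card_filter_val_lt_of_le hk.le] at hhead
  rw [← sum_filter_add_sum_filter_not univ (fun i : Fin N => (i : ℕ) < k), sqSumBound]
  linarith

theorem Antitone.sum_tail_le_tailThreshold (hx : Antitone x) (hx0 : ∀ i, 0 ≤ x i)
    (hsum : ∑ i, x i = 1) (hk : 2 ≤ k) (hkN : k < N) (hQ : 1 < (∑ i, x i ^ 2) * (k + 1)) :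
    ∑ i ∈ {i : Fin N | ¬ (i : ℕ) < k}, x i ≤ tailThreshold k N := by
  refine le_of_not_gt fun hT => ?_
  have hbound := sqSumBound_le_inv_succ hk hkN
    (sum_filter_val_lt_eq_one_sub hsum ▸ hx.mul_le_sum_head hkN) (hx.sum_tail_le_mul hkN) hT
  have hQle := (hx.sum_sq_le_sqSumBound hx0 hsum hkN).trans hbound
  rw [le_div_iff₀ (by positivity)] at hQle
  linarith

end Sorted

theorem emp_main_inequality_general (N : ℕ) (s : Fin N → ℝ) (hs : s ≠ 0)
    (ω : Fin N → ℝ) (hω : ∀ i, ω i = |s i| / ∑ j, |s j|)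
    (Neff : ℕ) (hNeff : Neff = ⌊(∑ i, ω i ^ 2)⁻¹⌋₊)
    (σ : Equiv.Perm (Fin N)) (hσ : ∀ i j : Fin N, i ≤ j → ω (σ j) ≤ ω (σ i))
    (seff : ℝ) (hseff : seff = ∑ i ∈ univ.filter (fun i : Fin N => (i : ℕ) < Neff), ω (σ i))
    (h2 : 2 ≤ Neff) (hlt : Neff < N) :
    1 - seff ≤ (((N : ℝ) - Neff) / N) *
      (1 - Real.sqrt (((N : ℝ) - Neff - 1) / (((Neff : ℝ) + 1) * ((N : ℝ) - 1)))) := by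
  have hW : 0 < ∑ j, |s j| := by
    obtain ⟨i, hi⟩ := Function.ne_iff.1 hs
    exact sum_pos' (fun j _ => abs_nonneg _) ⟨i, mem_univ i, abs_pos.2 hi⟩
  have hsum : ∑ i, ω (σ i) = 1 := by
    rw [Equiv.sum_comp σ ω, Fintype.sum_congr _ _ hω, ← sum_div, div_self hW.ne']
  have hQ : 1 < (∑ i, ω (σ i) ^ 2) * (Neff + 1) := by
    rw [Equiv.sum_comp σ (ω · ^ 2), hNeff]
    exact one_lt_mul_floor_inv_add_one (by omega)
  have htail := Antitone.sum_tail_le_tailThreshold (x := ω ∘ σ) (fun i j h => hσ i j h)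
    (fun i => by rw [Function.comp_apply, hω]; positivity) hsum h2 hlt hQ
  rw [hseff, sum_filter_val_lt_eq_one_sub hsum, sub_sub_cancel]
  exact htail

/-- For a nonzero score vector `s ∈ ℝ^N` with normalized weights
`ω_i = |s_i| / ∑_j |s_j|`, effective number `N_eff = ⌊(∑ ω_i²)⁻¹⌋` and effective
mass `s_eff` (sum of the `N_eff` largest entries of `ω`, obtained through a
sorting permutation `σ`), if `2 ≤ N_eff < N` then
`1 - s_eff ≤ ((N - N_eff)/N) * (1 - √((N - N_eff - 1)/((N_eff + 1)(N - 1))))`. -/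
theorem emp_main_inequality (N : ℕ) (hN : 2 ≤ N) (s : Fin N → ℝ) (hs : s ≠ 0)
    (ω : Fin N → ℝ) (hω : ∀ i, ω i = |s i| / ∑ j, |s j|)
    (Neff : ℕ) (hNeff : Neff = ⌊(∑ i, ω i ^ 2)⁻¹⌋₊)
    (σ : Equiv.Perm (Fin N)) (hσ : ∀ i j : Fin N, i ≤ j → ω (σ j) ≤ ω (σ i))
    (seff : ℝ) (hseff : seff = ∑ i ∈ univ.filter (fun i : Fin N => (i : ℕ) < Neff), ω (σ i))
    (h2 : 2 ≤ Neff) (hlt : Neff < N) :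
    1 - seff ≤ (((N : ℝ) - Neff) / N) *
      (1 - Real.sqrt (((N : ℝ) - Neff - 1) / (((Neff : ℝ) + 1) * ((N : ℝ) - 1)))) :=
  emp_main_inequality_general N s hs ω hω Neff hNeff σ hσ seff hseff h2 hlt
end

section
/- Let N ≥ 2. The infimum of φ_1(ω) = ω_1 over the set A_1 = {ω ∈ Δ̃ : 1 ≤ (∑_{i=1}^{N} ω_i²)^{-1} < 2} equals 1/2, and it is attained at the barycenter b_{[2]} = (1/2, 1/2, 0, …, 0). -/
open Finset

/-! On the ordered simplex `ω₁ ≥ ω₂ ≥ …`, the sum of squares is at most `ω₁ ∑ ωᵢ = ω₁`, and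
`(∑ ωᵢ²)⁻¹ < 2` means `∑ ωᵢ² > 1/2`; hence `ω₁ > 1/2` on `A₁`. Conversely the points
`(1/2 + t, 1/2 - t, 0, …, 0)` lie in `A₁` for `0 < t ≤ 1/2` and tend to `b_{[2]}` as `t → 0`,
so `1/2 = φ₁(b_{[2]})` is a limit of values of `φ₁` on `A₁`. -/

def A₁ (N : ℕ) : Set (Fin N → ℝ) :=
  {ω | (∀ i, 0 ≤ ω i) ∧ (∑ i, ω i = 1) ∧ (∀ i j : Fin N, i ≤ j → ω j ≤ ω i) ∧
    (1 : ℝ) ≤ (∑ i, ω i ^ 2)⁻¹ ∧ (∑ i, ω i ^ 2)⁻¹ < 2}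

theorem sum_sq_le_mul_sum {ι : Type*} [Fintype ι] {ω : ι → ℝ} {M : ℝ}
    (h0 : ∀ i, 0 ≤ ω i) (hM : ∀ i, ω i ≤ M) : ∑ i, ω i ^ 2 ≤ M * ∑ i, ω i := by
  rw [mul_sum]
  exact sum_le_sum fun i _ => by rw [sq]; exact mul_le_mul_of_nonneg_right (hM i) (h0 i)

theorem half_lt_of_one_le_inv_of_inv_lt_two {s : ℝ} (h1 : 1 ≤ s⁻¹) (h2 : s⁻¹ < 2) :
    1 / 2 < s := by
  have hs : 0 < s := inv_pos.mp (one_pos.trans_le h1)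
  rwa [one_div, inv_lt_comm₀ two_pos hs]

theorem half_lt_apply_zero_of_mem_A₁ {n : ℕ} {ω : Fin (n + 1) → ℝ} (hω : ω ∈ A₁ (n + 1)) :
    1 / 2 < ω 0 := by
  obtain ⟨h0, hsum, hanti, h1, h2⟩ := hω
  calc 1 / 2 < ∑ i, ω i ^ 2 := half_lt_of_one_le_inv_of_inv_lt_two h1 h2
    _ ≤ ω 0 * ∑ i, ω i := sum_sq_le_mul_sum h0 fun i => hanti 0 i (Fin.zero_le i)
    _ = ω 0 := by rw [hsum, mul_one]

theorem sum_filter_val_lt_one {M : Type*} [AddCommMonoid M] {n : ℕ} (ω : Fin (n + 1) → M) :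
    ∑ i ∈ univ.filter (fun i : Fin (n + 1) => (i : ℕ) < 1), ω i = ω 0 := by
  have : univ.filter (fun i : Fin (n + 1) => (i : ℕ) < 1) = {0} := by
    ext i
    simp only [mem_filter, mem_univ, true_and, mem_singleton, Nat.lt_one_iff, Fin.ext_iff,
      Fin.val_zero]
  rw [this, sum_singleton]

noncomputable def pairPoint (n : ℕ) (t : ℝ) : Fin (n + 2) → ℝ :=
  Fin.cons (1 / 2 + t) (Fin.cons (1 / 2 - t) 0)

theorem continuous_pairPoint (n : ℕ) : Continuous (pairPoint n) := by
  unfold pairPoint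
  fun_prop

theorem sum_pairPoint (n : ℕ) (t : ℝ) : ∑ i, pairPoint n t i = 1 := by
  simp [pairPoint, Fin.sum_univ_succ]
  ring

theorem sum_sq_pairPoint (n : ℕ) (t : ℝ) : ∑ i, pairPoint n t i ^ 2 = 1 / 2 + 2 * t ^ 2 := by
  simp [pairPoint, Fin.sum_univ_succ]
  ring

theorem pairPoint_nonneg {n : ℕ} {t : ℝ} (ht0 : 0 ≤ t) (ht : t ≤ 1 / 2) (i : Fin (n + 2)) :
    0 ≤ pairPoint n t i := by
  cases i using Fin.cases with
  | zero => simp [pairPoint]; linarith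
  | succ i =>
    cases i using Fin.cases with
    | zero => simp [pairPoint]; linarith
    | succ i => simp [pairPoint]

theorem antitone_pairPoint {n : ℕ} {t : ℝ} (ht0 : 0 ≤ t) (ht : t ≤ 1 / 2) :
    Antitone (pairPoint n t) := by
  rw [Fin.antitone_iff_succ_le]
  intro i
  cases i using Fin.cases with
  | zero => simp [pairPoint]; linarith
  | succ i =>
    rw [show pairPoint n t i.succ.succ = 0 by simp [pairPoint]]
    exact pairPoint_nonneg ht0 ht _

theorem pairPoint_mem_A₁ {n : ℕ} {t : ℝ} (ht0 : 0 < t) (ht : t ≤ 1 / 2) :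
    pairPoint n t ∈ A₁ (n + 2) := by
  refine ⟨pairPoint_nonneg ht0.le ht, sum_pairPoint n t,
    fun i j hij => antitone_pairPoint ht0.le ht hij, ?_, ?_⟩
  · rw [sum_sq_pairPoint, one_le_inv₀ (by positivity)]
    nlinarith
  · rw [sum_sq_pairPoint, inv_lt_comm₀ (by positivity) two_pos]
    nlinarith

theorem pairPoint_zero_mem_closure_A₁ (n : ℕ) : pairPoint n 0 ∈ closure (A₁ (n + 2)) := by
  refine map_mem_closure (continuous_pairPoint n) (s := Set.Ioc 0 (1 / 2)) ?_
    fun t ht => pairPoint_mem_A₁ ht.1 ht.2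
  rw [closure_Ioc (by norm_num)]
  exact Set.left_mem_Icc.mpr (by norm_num)

/-- For `N ≥ 2`, the infimum of `φ_1(ω) = ω_1` over
`A_1 = {ω ∈ Δ̃ : 1 ≤ (∑ ω_i²)⁻¹ < 2}` equals `1/2`, and it is attained at the
barycenter `b_{[2]} = (1/2, 1/2, 0, …, 0)` (which lies in the closure of `A_1`
and on which `φ_1` takes the value `1/2`). -/
theorem emp_inf_phi_one (N : ℕ) (hN : 2 ≤ N)
    (b2 : Fin N → ℝ) (hb2 : ∀ i, b2 i = if (i : ℕ) < 2 then 1 / 2 else 0) :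
    sInf ((fun ω : Fin N → ℝ => ∑ i ∈ univ.filter (fun i : Fin N => (i : ℕ) < 1), ω i) ''
        {ω : Fin N → ℝ |
          (∀ i, 0 ≤ ω i) ∧ (∑ i, ω i = 1) ∧ (∀ i j : Fin N, i ≤ j → ω j ≤ ω i) ∧
          (1 : ℝ) ≤ (∑ i, ω i ^ 2)⁻¹ ∧ (∑ i, ω i ^ 2)⁻¹ < 2}) = 1 / 2 ∧
    b2 ∈ closure {ω : Fin N → ℝ |
          (∀ i, 0 ≤ ω i) ∧ (∑ i, ω i = 1) ∧ (∀ i j : Fin N, i ≤ j → ω j ≤ ω i) ∧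
          (1 : ℝ) ≤ (∑ i, ω i ^ 2)⁻¹ ∧ (∑ i, ω i ^ 2)⁻¹ < 2} ∧
    (∑ i ∈ univ.filter (fun i : Fin N => (i : ℕ) < 1), b2 i) = 1 / 2 := by
  obtain ⟨n, rfl⟩ : ∃ n, N = n + 2 := ⟨N - 2, by omega⟩
  change sInf (_ '' A₁ (n + 2)) = 1 / 2 ∧ b2 ∈ closure (A₁ (n + 2)) ∧ _
  simp only [sum_filter_val_lt_one]
  have hb : b2 = pairPoint n 0 := by
    ext i
    cases i using Fin.cases with
    | zero => simp [pairPoint, hb2]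
    | succ i => cases i using Fin.cases <;> simp [pairPoint, hb2]
  have hclosure : b2 ∈ closure (A₁ (n + 2)) := hb ▸ pairPoint_zero_mem_closure_A₁ n
  have hb0 : b2 0 = 1 / 2 := by simp [hb2]
  have hlower : 1 / 2 ∈ lowerBounds ((fun ω => ω 0) '' A₁ (n + 2)) := by
    rintro _ ⟨ω, hω, rfl⟩
    exact (half_lt_apply_zero_of_mem_A₁ hω).le
  have hlimit : 1 / 2 ∈ closure ((fun ω => ω 0) '' A₁ (n + 2)) :=
    hb0 ▸ map_mem_closure (f := fun ω => ω 0) (continuous_apply 0) hclosure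
      (Set.mapsTo_image _ _)
  have hglb := isGLB_of_mem_closure hlower hlimit
  exact ⟨hglb.csInf_eq ((closure_nonempty_iff.mp ⟨b2, hclosure⟩).image _), hclosure, hb0⟩
end

section
/- Let N ≥ 3 and 2 ≤ ν ≤ N−1, and let p_ν = b_{[N]} + (r_{ν+1}/r_1)(b_{[1]} − b_{[N]}) with r_j = √(1/j − 1/N). Then p_ν has nonnegative coordinates summing to 1, its coordinates are nonincreasing (p_ν ∈ Δ̃), and ∑_{i=1}^{N} (p_ν)_i² = 1/(ν+1); in particular p_ν lies in the closure of A_ν = {ω ∈ Δ̃ : ν ≤ (∑_{i=1}^{N} ω_i²)^{-1} < ν+1}. -/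
/-!
Along the segment `c ↦ b_{[N]} + c (b_{[1]} - b_{[N]})` from the barycenter to the first vertex,
the sum of squares is `1/N + c² (1 - 1/N)`, strictly increasing for `c ≥ 0`; the choice
`c = r_{ν+1}/r_1` makes it exactly `1/(ν+1)`. Moving slightly further towards the vertex, the
sum of squares lies in `(1/(ν+1), 1/ν)`, so these points lie in `A_ν` and accumulate at `p_ν`.
-/

open Finset Filter Topology

noncomputable section

theorem Fin.sum_ite_val_eq_zero {N : ℕ} [NeZero N] (a b : ℝ) :
    ∑ i : Fin N, (if (i : ℕ) = 0 then a else b) = a + ((N : ℝ) - 1) * b := by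
  obtain ⟨n, rfl⟩ := Nat.exists_eq_succ_of_ne_zero (NeZero.ne N)
  simp [Fin.sum_univ_succ]

theorem one_sub_one_div_natCast_pos {N : ℕ} (hN : 2 ≤ N) : 0 < 1 - 1 / (N : ℝ) := by
  rw [sub_pos, div_lt_one (by positivity)]
  exact_mod_cast hN

/-- The point `b_{[N]} + c (b_{[1]} - b_{[N]})`. -/
def barycenterSegment (N : ℕ) (c : ℝ) (i : Fin N) : ℝ :=
  1 / (N : ℝ) + c * ((if (i : ℕ) = 0 then (1 : ℝ) else 0) - 1 / N)

/-- `A_ν`, with `ν` allowed to be real. -/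
def orderedSimplexLayer (N : ℕ) (x : ℝ) : Set (Fin N → ℝ) :=
  {ω | (∀ i, 0 ≤ ω i) ∧ (∑ i, ω i = 1) ∧ (∀ i j : Fin N, i ≤ j → ω j ≤ ω i) ∧
    x ≤ (∑ i, ω i ^ 2)⁻¹ ∧ (∑ i, ω i ^ 2)⁻¹ < x + 1}

namespace barycenterSegment

variable {N : ℕ} {c : ℝ}

theorem nonneg (hc₀ : 0 ≤ c) (hc₁ : c ≤ 1) (i : Fin N) : 0 ≤ barycenterSegment N c i := by
  have hN : 1 / (N : ℝ) ≤ 1 := div_le_one_of_le₀ (by exact_mod_cast i.pos) (Nat.cast_nonneg N)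
  unfold barycenterSegment
  split_ifs <;> nlinarith [show 0 ≤ 1 / (N : ℝ) by positivity]

theorem antitone (hc : 0 ≤ c) (i j : Fin N) (hij : i ≤ j) :
    barycenterSegment N c j ≤ barycenterSegment N c i := by
  unfold barycenterSegment
  by_cases hi : (i : ℕ) = 0
  · split_ifs <;> nlinarith [show 0 ≤ 1 / (N : ℝ) by positivity]
  · have hj : (j : ℕ) ≠ 0 := by have := Fin.le_def.1 hij; omega
    simp [hi, hj]

theorem sum [NeZero N] : ∑ i, barycenterSegment N c i = 1 := by
  have hN : (N : ℝ) ≠ 0 := by exact_mod_cast NeZero.ne N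
  simp only [barycenterSegment, apply_ite (fun a : ℝ => 1 / (N : ℝ) + c * (a - 1 / N)),
    Fin.sum_ite_val_eq_zero]
  field_simp
  ring

theorem sum_sq [NeZero N] :
    ∑ i, barycenterSegment N c i ^ 2 = 1 / N + c ^ 2 * (1 - 1 / N) := by
  have hN : (N : ℝ) ≠ 0 := by exact_mod_cast NeZero.ne N
  simp only [barycenterSegment, apply_ite (fun a : ℝ => (1 / (N : ℝ) + c * (a - 1 / N)) ^ 2),
    Fin.sum_ite_val_eq_zero]
  field_simp
  ring

theorem continuous : Continuous (barycenterSegment N) :=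
  continuous_pi fun _ => by unfold barycenterSegment; fun_prop

theorem lt_one_of_sum_sq_lt_one (hN : 2 ≤ N) (h : ∑ i, barycenterSegment N c i ^ 2 < 1) :
    c < 1 := by
  have : NeZero N := ⟨by omega⟩
  have hN' := one_sub_one_div_natCast_pos hN
  rw [sum_sq] at h
  by_contra! hc
  nlinarith [one_le_pow₀ (n := 2) hc]

theorem sum_sq_sqrt_div {j : ℕ} (hN : 2 ≤ N) (hj : 0 < j) (hjN : j ≤ N) :
    ∑ i, barycenterSegment N (√(1 / j - 1 / N) / √(1 - 1 / N)) i ^ 2 = 1 / j := by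
  have : NeZero N := ⟨by omega⟩
  have hN' := one_sub_one_div_natCast_pos hN
  have hjN' : 0 ≤ 1 / (j : ℝ) - 1 / N := sub_nonneg.2 <| one_div_le_one_div_of_le
    (by exact_mod_cast hj) (by exact_mod_cast hjN)
  rw [sum_sq, div_pow, Real.sq_sqrt hjN', Real.sq_sqrt hN'.le, div_mul_cancel₀ _ hN'.ne']
  ring

end barycenterSegment

theorem barycenterSegment_mem_closure_orderedSimplexLayer {N : ℕ} (hN : 2 ≤ N) {t x : ℝ}
    (ht : 0 ≤ t) (hx : 0 < x) (hS : ∑ i, barycenterSegment N t i ^ 2 = 1 / (x + 1)) :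
    barycenterSegment N t ∈ closure (orderedSimplexLayer N x) := by
  have : NeZero N := ⟨by omega⟩
  have ht₁ : t < 1 := barycenterSegment.lt_one_of_sum_sq_lt_one hN <| by
    rw [hS, div_lt_one (by positivity)]; linarith
  have hS_near : ∀ᶠ c in 𝓝[>] t, ∑ i, barycenterSegment N c i ^ 2 < 1 / x := by
    have hS_cont : Continuous fun c => ∑ i, barycenterSegment N c i ^ 2 :=
      continuous_finsetSum _ fun i _ =>
        ((continuous_apply i).comp barycenterSegment.continuous).pow 2
    refine nhdsWithin_le_nhds <| hS_cont.continuousAt.eventually_lt continuousAt_const ?_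
    exact hS ▸ one_div_lt_one_div_of_lt hx (by linarith)
  have h_one_near : ∀ᶠ c in 𝓝[>] t, c < 1 := nhdsWithin_le_nhds <| eventually_lt_nhds ht₁
  refine mem_closure_of_tendsto
    (barycenterSegment.continuous.continuousWithinAt (s := Set.Ioi t)) ?_
  filter_upwards [self_mem_nhdsWithin, hS_near, h_one_near] with c (htc : t < c) hcS hc₁
  have hc₀ : 0 ≤ c := ht.trans htc.le
  have hS_gt : 1 / (x + 1) < ∑ i, barycenterSegment N c i ^ 2 := by
    have hN' := one_sub_one_div_natCast_pos hN
    have : t ^ 2 < c ^ 2 := pow_lt_pow_left₀ htc ht two_ne_zero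
    rw [← hS, barycenterSegment.sum_sq, barycenterSegment.sum_sq]
    nlinarith
  have hS_pos : 0 < ∑ i, barycenterSegment N c i ^ 2 := lt_trans (by positivity) hS_gt
  refine ⟨barycenterSegment.nonneg hc₀ hc₁.le, barycenterSegment.sum,
    barycenterSegment.antitone hc₀, ?_, ?_⟩
  · exact (le_inv_comm₀ hx hS_pos).2 ((one_div x).symm ▸ hcS.le)
  · exact (inv_lt_comm₀ hS_pos (by positivity)).2 ((one_div (x + 1)) ▸ hS_gt)

theorem emp_p_nu_in_closure_general (N ν : ℕ) (hν1 : 2 ≤ ν) (hν2 : ν ≤ N - 1)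
    (r : ℕ → ℝ) (hr : ∀ j, r j = Real.sqrt (1 / (j : ℝ) - 1 / (N : ℝ)))
    (p : Fin N → ℝ)
    (hp : ∀ i : Fin N,
      p i = 1 / (N : ℝ) + (r (ν + 1) / r 1) * ((if (i : ℕ) = 0 then (1 : ℝ) else 0) - 1 / N)) :
    (∀ i, 0 ≤ p i) ∧ (∑ i, p i = 1) ∧ (∀ i j : Fin N, i ≤ j → p j ≤ p i) ∧
    (∑ i, p i ^ 2 = 1 / ((ν : ℝ) + 1)) ∧
    p ∈ closure {ω : Fin N → ℝ |
        (∀ i, 0 ≤ ω i) ∧ (∑ i, ω i = 1) ∧ (∀ i j : Fin N, i ≤ j → ω j ≤ ω i) ∧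
        (ν : ℝ) ≤ (∑ i, ω i ^ 2)⁻¹ ∧ (∑ i, ω i ^ 2)⁻¹ < (ν : ℝ) + 1} := by
  have hN : 2 ≤ N := by omega
  have : NeZero N := ⟨by omega⟩
  set t := r (ν + 1) / r 1 with ht_def
  have ht : t = √(1 / ((ν + 1 : ℕ) : ℝ) - 1 / N) / √(1 - 1 / N) := by
    rw [ht_def, hr, hr, Nat.cast_one, div_one]
  have hS : ∑ i, barycenterSegment N t i ^ 2 = 1 / ((ν : ℝ) + 1) := by
    rw [ht, barycenterSegment.sum_sq_sqrt_div hN (by omega) (by omega), Nat.cast_succ]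
  have ht₀ : 0 ≤ t := ht ▸ by positivity
  have ht₁ : t < 1 := barycenterSegment.lt_one_of_sum_sq_lt_one hN <| by
    rw [hS, div_lt_one (by positivity)]; exact_mod_cast (by omega : 1 < ν + 1)
  obtain rfl : p = barycenterSegment N t := funext hp
  exact ⟨barycenterSegment.nonneg ht₀ ht₁.le, barycenterSegment.sum,
    barycenterSegment.antitone ht₀, hS,
    barycenterSegment_mem_closure_orderedSimplexLayer hN ht₀ (by positivity) hS⟩

/-- For `3 ≤ N`, `2 ≤ ν ≤ N-1`, the point
`p_ν = b_{[N]} + (r_{ν+1}/r_1)(b_{[1]} - b_{[N]})`, with `r_j = √(1/j - 1/N)`,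
has nonnegative coordinates summing to `1`, nonincreasing coordinates
(`p_ν ∈ Δ̃`), satisfies `∑ (p_ν)_i² = 1/(ν+1)`, and lies in the closure of
`A_ν = {ω ∈ Δ̃ : ν ≤ (∑ ω_i²)⁻¹ < ν+1}`. -/
theorem emp_p_nu_in_closure (N ν : ℕ) (hN : 3 ≤ N) (hν1 : 2 ≤ ν) (hν2 : ν ≤ N - 1)
    (r : ℕ → ℝ) (hr : ∀ j, r j = Real.sqrt (1 / (j : ℝ) - 1 / (N : ℝ)))
    (p : Fin N → ℝ)
    (hp : ∀ i : Fin N,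
      p i = 1 / (N : ℝ) + (r (ν + 1) / r 1) * ((if (i : ℕ) = 0 then (1 : ℝ) else 0) - 1 / N)) :
    (∀ i, 0 ≤ p i) ∧ (∑ i, p i = 1) ∧ (∀ i j : Fin N, i ≤ j → p j ≤ p i) ∧
    (∑ i, p i ^ 2 = 1 / ((ν : ℝ) + 1)) ∧
    p ∈ closure {ω : Fin N → ℝ |
        (∀ i, 0 ≤ ω i) ∧ (∑ i, ω i = 1) ∧ (∀ i j : Fin N, i ≤ j → ω j ≤ ω i) ∧
        (ν : ℝ) ≤ (∑ i, ω i ^ 2)⁻¹ ∧ (∑ i, ω i ^ 2)⁻¹ < (ν : ℝ) + 1} :=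
  emp_p_nu_in_closure_general N ν hν1 hν2 r hr p hp
end
end

section
/- Let N ≥ 2 and 1 ≤ ν ≤ N−1. Then the intersection of the ball B_ν with the face conv{b_{[1]}, b_{[2]}, …, b_{[ν]}} of the ordered simplex Δ̃ is exactly the single point {b_{[ν]}} (the ball B_ν is tangent to that face at b_{[ν]}). -/
open Finset

lemma sum_aux (N ν : ℕ) (hν : ν ≤ N) (g : ℕ → ℝ) :
    ∑ i : Fin N, (if (i : ℕ) < ν then g i else 0) = ∑ j ∈ Finset.range ν, g j := by
  rw [Fin.sum_univ_eq_sum_range (fun j => if j < ν then g j else 0) N]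
  rw [← Finset.sum_subset (Finset.range_subset_range.2 hν)
      (fun x _ hx => if_neg (fun h => hx (Finset.mem_range.2 h)))]
  exact Finset.sum_congr rfl fun j hj => if_pos (Finset.mem_range.1 hj)

/-- For `N ≥ 2` and `1 ≤ ν ≤ N-1`, the intersection of the ball
`B_ν = {ω ∈ Π : ‖ω - b_{[N]}‖² ≤ 1/ν - 1/N}` with the face
`conv{b_{[1]}, …, b_{[ν]}}` of the ordered simplex is exactly `{b_{[ν]}}`
(the ball is tangent to the face at `b_{[ν]}`). -/
theorem emp_ball_tangent_to_face (N ν : ℕ) (hN : 2 ≤ N) (hν1 : 1 ≤ ν) (hν2 : ν ≤ N - 1)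
    (b : ℕ → Fin N → ℝ)
    (hb : ∀ (k : ℕ) (i : Fin N), b k i = if (i : ℕ) < k then 1 / (k : ℝ) else 0) :
    {ω : Fin N → ℝ | (∑ i, ω i = 1) ∧
        ∑ i, (ω i - 1 / (N : ℝ)) ^ 2 ≤ 1 / (ν : ℝ) - 1 / N} ∩
      convexHull ℝ (b '' Set.Icc 1 ν) = {b ν} := by
  have hνN : ν ≤ N := le_trans hν2 (Nat.sub_le N 1)
  have hν0 : (0:ℝ) < ν := by exact_mod_cast hν1
  have hN0 : (0:ℝ) < N := by positivity
  -- sum of b ν is 1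
  have hsum_b : ∑ i, b ν i = 1 := by
    simp_rw [hb]
    rw [sum_aux N ν hνN (fun _ => 1 / (ν:ℝ)), Finset.sum_const, Finset.card_range,
      nsmul_eq_mul]
    field_simp
  -- squares of b ν
  have hsq_b : ∀ i : Fin N, (b ν i) ^ 2 = (1/(ν:ℝ)) * b ν i := by
    intro i; rw [hb]; split <;> ring
  have hsum_bsq : ∑ i, (b ν i) ^ 2 = 1 / (ν:ℝ) := by
    simp_rw [hsq_b, ← Finset.mul_sum, hsum_b, mul_one]
  -- expansion identity
  have expand : ∀ ω : Fin N → ℝ, ∑ i, (ω i - 1 / (N : ℝ)) ^ 2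
      = ∑ i, (ω i)^2 - (2/(N:ℝ)) * (∑ i, ω i) + (N:ℝ) * (1/(N:ℝ))^2 := by
    intro ω
    have : ∀ i : Fin N, (ω i - 1 / (N : ℝ)) ^ 2
        = (ω i)^2 - (2/(N:ℝ)) * ω i + (1/(N:ℝ))^2 := fun i => by
      field_simp; ring
    simp_rw [this]
    rw [Finset.sum_add_distrib, Finset.sum_sub_distrib, ← Finset.mul_sum,
      Finset.sum_const, Finset.card_univ, Fintype.card_fin, nsmul_eq_mul]
  ext ω
  simp only [Set.mem_inter_iff, Set.mem_setOf_eq, Set.mem_singleton_iff]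
  constructor
  · rintro ⟨⟨hsum, hball⟩, hhull⟩
    -- hull elements: nonneg, zero past ν
    have hC : ∀ i : Fin N, 0 ≤ ω i ∧ (ν ≤ (i:ℕ) → ω i = 0) := by
      have : ω ∈ {x : Fin N → ℝ | ∀ i : Fin N, 0 ≤ x i ∧ (ν ≤ (i:ℕ) → x i = 0)} := by
        refine convexHull_min ?_ ?_ hhull
        · rintro _ ⟨k, hk, rfl⟩ i
          obtain ⟨hk1, hk2⟩ := hk
          rw [hb]
          refine ⟨by split <;> positivity, fun hi => if_neg (by omega)⟩
        · intro x hx y hy a c ha hc hac i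
          refine ⟨add_nonneg (mul_nonneg ha (hx i).1) (mul_nonneg hc (hy i).1), fun hi => ?_⟩
          simp [Pi.add_apply, Pi.smul_apply, (hx i).2 hi, (hy i).2 hi]
      exact this
    -- ∑ ω² ≤ 1/ν
    have hsq : ∑ i, (ω i)^2 ≤ 1 / (ν:ℝ) := by
      have := hball
      rw [expand ω, hsum] at this
      have hNN : (N:ℝ) * (1/(N:ℝ))^2 = 1/(N:ℝ) := by field_simp
      rw [hNN] at this
      have h2N : 2/(N:ℝ) * 1 = 2 * (1/(N:ℝ)) := by ring
      rw [h2N] at this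
      linarith
    -- ∑ ω b ν = (1/ν)
    have hdot : ∑ i, ω i * b ν i = 1 / (ν:ℝ) := by
      have : ∀ i : Fin N, ω i * b ν i = (1/(ν:ℝ)) * ω i := by
        intro i
        rw [hb]
        by_cases h : (i:ℕ) < ν
        · rw [if_pos h]; ring
        · rw [if_neg h, (hC i).2 (le_of_not_gt h)]; ring
      simp_rw [this, ← Finset.mul_sum, hsum, mul_one]
    -- key
    have key : ∑ i, (ω i - b ν i)^2 ≤ 0 := by
      have : ∀ i : Fin N, (ω i - b ν i)^2 = (ω i)^2 - 2 * (ω i * b ν i) + (b ν i)^2 :=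
        fun i => by ring
      simp_rw [this]
      rw [Finset.sum_add_distrib, Finset.sum_sub_distrib, ← Finset.mul_sum, hdot, hsum_bsq]
      linarith
    have hz : ∀ i ∈ Finset.univ, (ω i - b ν i)^2 = 0 := by
      rw [← Finset.sum_eq_zero_iff_of_nonneg (fun i _ => sq_nonneg _)]
      exact le_antisymm key (Finset.sum_nonneg fun i _ => sq_nonneg _)
    funext i
    have := hz i (Finset.mem_univ i)
    have := pow_eq_zero_iff (n := 2) (by norm_num) |>.1 this
    linarith [sub_eq_zero.1 this]
  · rintro rfl
    refine ⟨⟨hsum_b, ?_⟩, subset_convexHull ℝ _ ⟨ν, ⟨hν1, le_refl ν⟩, rfl⟩⟩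
    rw [expand (b ν), hsum_b, hsum_bsq]
    have hNN : (N:ℝ) * (1/(N:ℝ))^2 = 1/(N:ℝ) := by field_simp
    have h2N : 2/(N:ℝ) * 1 = 2 * (1/(N:ℝ)) := by ring
    rw [hNN, h2N]; linarith
end

section
/- Let N ≥ 2. Then: (i) Δ ⊆ B_1, i.e., every ω in the standard simplex satisfies ‖ω − b_{[N]}‖² ≤ 1 − 1/N; (ii) B_N = {b_{[N]}}; and (iii) B_{N−1} ⊆ Δ, i.e., every ω ∈ Π with ‖ω − b_{[N]}‖² ≤ 1/(N−1) − 1/N has all coordinates nonnegative. -/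
open Finset

/-!
Write `x = ω - b` with `b` the barycentre, so `∑ xᵢ = 0` and `‖x‖² = ∑ ωᵢ² - 1/N`.
On the simplex `ωᵢ² ≤ ωᵢ`, giving (i); (ii) is the equality case of `‖x‖² ≥ 0`.
For (iii), Cauchy–Schwarz applied to `xᵢ = -∑_{j ≠ i} xⱼ` gives `N xᵢ² ≤ (N - 1) ‖x‖²`,
so inside `B_{N-1}` every `|xᵢ| ≤ 1/N`, i.e. `ωᵢ ≥ 0`.
-/

section Barycentre

variable {ι : Type*} [Fintype ι]

lemma sum_sq_sub_inv_card {ω : ι → ℝ} (hω : ∑ i, ω i = 1) :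
    ∑ i, (ω i - 1 / (Fintype.card ι : ℝ)) ^ 2 = ∑ i, ω i ^ 2 - 1 / Fintype.card ι := by
  have : Nonempty ι := univ_nonempty_iff.mp (nonempty_of_sum_ne_zero (hω ▸ one_ne_zero))
  have hcard : (Fintype.card ι : ℝ) ≠ 0 := by positivity
  simp only [sub_sq, sum_add_distrib, sum_sub_distrib, ← sum_mul, ← mul_sum, hω,
    sum_const, card_univ, nsmul_eq_mul]
  field_simp
  ring

lemma sum_sub_inv_card_eq_zero {ω : ι → ℝ} (hω : ∑ i, ω i = 1) :
    ∑ i, (ω i - 1 / (Fintype.card ι : ℝ)) = 0 := by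
  have : Nonempty ι := univ_nonempty_iff.mp (nonempty_of_sum_ne_zero (hω ▸ one_ne_zero))
  simp [sum_sub_distrib, hω]

lemma sum_sq_le_one_of_mem_stdSimplex {ω : ι → ℝ} (hω : ω ∈ stdSimplex ℝ ι) :
    ∑ i, ω i ^ 2 ≤ 1 := by
  calc ∑ i, ω i ^ 2 ≤ ∑ i, ω i := sum_le_sum fun i _ => by
        obtain ⟨h0, h1⟩ := mem_Icc_of_mem_stdSimplex hω i
        nlinarith
    _ = 1 := hω.2

lemma eq_const_of_sum_sq_sub_nonpos {ω : ι → ℝ} {c : ℝ} (h : ∑ i, (ω i - c) ^ 2 ≤ 0) :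
    ω = fun _ => c := by
  have hzero := (sum_eq_zero_iff_of_nonneg fun i _ => sq_nonneg (ω i - c)).mp
    (h.antisymm (sum_nonneg fun i _ => sq_nonneg _))
  funext i
  simpa [sub_eq_zero] using hzero i (mem_univ i)

lemma card_mul_sq_le_of_sum_eq_zero {x : ι → ℝ} (hx : ∑ j, x j = 0) (i : ι) :
    (Fintype.card ι : ℝ) * x i ^ 2 ≤ (Fintype.card ι - 1) * ∑ j, x j ^ 2 := by
  classical
  have hrest : ∑ j ∈ univ.erase i, x j = -x i := by
    linarith [sum_erase_add univ x (mem_univ i)]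
  have hcard : ((univ.erase i).card : ℝ) = Fintype.card ι - 1 := by
    rw [card_erase_of_mem (mem_univ i), card_univ,
      Nat.cast_sub (Fintype.card_pos_iff.mpr ⟨i⟩), Nat.cast_one]
  have hcs := sq_sum_le_card_mul_sum_sq (s := univ.erase i) (f := x)
  rw [hrest, hcard, neg_sq] at hcs
  have hsplit := sum_erase_add univ (fun j => x j ^ 2) (mem_univ i)
  linear_combination hcs + ((Fintype.card ι : ℝ) - 1) * hsplit

lemma nonneg_of_sum_sq_sub_inv_card_le {ω : ι → ℝ} (hω : ∑ i, ω i = 1)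
    (hle : ∑ i, (ω i - 1 / (Fintype.card ι : ℝ)) ^ 2 ≤
      1 / ((Fintype.card ι : ℝ) - 1) - 1 / Fintype.card ι) (i : ι) :
    0 ≤ ω i := by
  have hn : (1 : ℝ) ≤ Fintype.card ι := by exact_mod_cast Fintype.card_pos_iff.mpr ⟨i⟩
  set n : ℝ := (Fintype.card ι : ℝ)
  have hdev := card_mul_sq_le_of_sum_eq_zero (sum_sub_inv_card_eq_zero hω) i
  -- `1 / (n - 1)` is the junk value `0` when `n = 1`, so `(n - 1) / (n - 1)` is only `≤ 1`
  have hradius : (n - 1) * (1 / (n - 1) - 1 / n) ≤ 1 / n := by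
    rw [mul_sub, mul_one_div, mul_one_div]
    have : (n - 1) / n = 1 - 1 / n := by field_simp
    linarith [div_self_le_one (n - 1)]
  have hpos : 0 < n := by linarith
  have hsq : n * (ω i - 1 / n) ^ 2 ≤ n * (1 / n) ^ 2 :=
    calc n * (ω i - 1 / n) ^ 2 ≤ (n - 1) * ∑ j, (ω j - 1 / n) ^ 2 := hdev
      _ ≤ (n - 1) * (1 / (n - 1) - 1 / n) := mul_le_mul_of_nonneg_left hle (by linarith)
      _ ≤ 1 / n := hradius
      _ = n * (1 / n) ^ 2 := by field_simp
  have hdev_i := abs_le_of_sq_le_sq' (le_of_mul_le_mul_left hsq hpos) (by positivity)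
  linarith [hdev_i.1]

end Barycentre

/-- For `N ≥ 2`:
(i) `Δ ⊆ B_1`: every `ω` in the standard simplex satisfies
    `‖ω - b_{[N]}‖² ≤ 1 - 1/N`;
(ii) `B_N = {b_{[N]}}`;
(iii) `B_{N-1} ⊆ Δ`: every `ω ∈ Π` with `‖ω - b_{[N]}‖² ≤ 1/(N-1) - 1/N`
    has all coordinates nonnegative. -/
theorem emp_extreme_balls (N : ℕ) (hN : 2 ≤ N) :
    (∀ ω : Fin N → ℝ, (∀ i, 0 ≤ ω i) → (∑ i, ω i = 1) →
      ∑ i, (ω i - 1 / (N : ℝ)) ^ 2 ≤ 1 - 1 / (N : ℝ)) ∧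
    ({ω : Fin N → ℝ | (∑ i, ω i = 1) ∧
        ∑ i, (ω i - 1 / (N : ℝ)) ^ 2 ≤ 1 / (N : ℝ) - 1 / N} =
      {fun _ : Fin N => (1 : ℝ) / N}) ∧
    (∀ ω : Fin N → ℝ, (∑ i, ω i = 1) →
      (∑ i, (ω i - 1 / (N : ℝ)) ^ 2 ≤ 1 / ((N : ℝ) - 1) - 1 / N) →
      ∀ i, 0 ≤ ω i) := by
  have hcard : (Fintype.card (Fin N) : ℝ) = N := by simp
  refine ⟨fun ω hpos hsum => ?_, ?_, fun ω hsum hle => ?_⟩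
  · have := sum_sq_sub_inv_card hsum
    rw [hcard] at this
    linarith [sum_sq_le_one_of_mem_stdSimplex ⟨hpos, hsum⟩]
  · ext ω
    refine ⟨fun ⟨_, hle⟩ => eq_const_of_sum_sq_sub_nonpos (by linarith), ?_⟩
    rintro rfl
    have : (N : ℝ) ≠ 0 := Nat.cast_ne_zero.mpr (by omega)
    simp [this]
  · exact nonneg_of_sum_sq_sub_inv_card_le hsum (by rwa [hcard])
end

section
/- Let N ≥ 3, let 2 ≤ ν ≤ N−1, and let ω ∈ Δ̃ with ω ∉ [b_{[1]}, b_{[N]}] (ω is not on the segment from b_{[1]} to b_{[N]}). Then there exist indices i, j with 1 < i ≤ ν < j ≤ N such that ω_i > ω_j, and for any such pair, setting t = (ω_j − ω_1)/(ω_i − ω_j), one has t ≤ −1; moreover the vector x ∈ ℝ^N with x_1 = 1, x_i = t, x_j = −(1+t), and all other coordinates 0, satisfies ∑_{k=1}^{N} x_k = 0 and ∑_{k=1}^{ν} x_k = 1 + t ≤ 0, and ⟨ω, x⟩ = ω_1 + t·ω_i − (1+t)·ω_j ≥ 0, so that ‖ω + εx‖ ≥ ‖ω‖ for every ε > 0.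 -/
open Finset

/-- Descent-direction construction.  For `3 ≤ N`, `2 ≤ ν ≤ N-1`
and `ω ∈ Δ̃` not on the segment `[b_{[1]}, b_{[N]}]`: there exist (1-indexed)
indices `1 < i ≤ ν < j ≤ N` with `ω_i > ω_j`; and for any such pair, setting
`t = (ω_j - ω_1)/(ω_i - ω_j)` one has `t ≤ -1`, and the vector `x` with
`x_1 = 1`, `x_i = t`, `x_j = -(1+t)`, other coordinates `0`, satisfies
`∑ x_k = 0`, `∑_{k=1}^{ν} x_k = 1 + t ≤ 0`,
`⟨ω, x⟩ = ω_1 + t·ω_i - (1+t)·ω_j ≥ 0`, and `‖ω + εx‖ ≥ ‖ω‖` for every `ε > 0`.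
(Indices here are 0-based: `ω_1` is `ω ⟨0,_⟩`, and `1 < i ≤ ν`, `ν < j ≤ N`
become `1 ≤ i < ν`, `ν ≤ j < N`.) -/
theorem emp_descent_direction (N ν : ℕ) (hN : 3 ≤ N) (hν1 : 2 ≤ ν) (hν2 : ν ≤ N - 1)
    (ω : Fin N → ℝ) (hnn : ∀ i, 0 ≤ ω i) (hsum : ∑ i, ω i = 1)
    (hord : ∀ i j : Fin N, i ≤ j → ω j ≤ ω i)
    (b1 bN : Fin N → ℝ)
    (hb1 : ∀ i : Fin N, b1 i = if (i : ℕ) = 0 then 1 else 0)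
    (hbN : ∀ i : Fin N, bN i = 1 / (N : ℝ))
    (hseg : ω ∉ segment ℝ b1 bN) :
    (∃ i j : Fin N, 1 ≤ (i : ℕ) ∧ (i : ℕ) < ν ∧ ν ≤ (j : ℕ) ∧ ω j < ω i) ∧
    ∀ i j : Fin N, 1 ≤ (i : ℕ) → (i : ℕ) < ν → ν ≤ (j : ℕ) → ω j < ω i →
      ∀ t : ℝ, t = (ω j - ω ⟨0, by omega⟩) / (ω i - ω j) →
      ∀ x : Fin N → ℝ,
        (∀ k : Fin N, x k = if (k : ℕ) = 0 then 1 else if k = i then t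
          else if k = j then -(1 + t) else 0) →
        t ≤ -1 ∧ (∑ k, x k) = 0 ∧
        (∑ k ∈ univ.filter (fun k : Fin N => (k : ℕ) < ν), x k) = 1 + t ∧ 1 + t ≤ 0 ∧
        (∑ k, ω k * x k) = ω ⟨0, by omega⟩ + t * ω i - (1 + t) * ω j ∧
        0 ≤ (∑ k, ω k * x k) ∧
        ∀ ε : ℝ, 0 < ε →
          Real.sqrt (∑ k, ω k ^ 2) ≤ Real.sqrt (∑ k, (ω k + ε * x k) ^ 2) := by
  have hN0 : 0 < N := by omega
  obtain ⟨i0, hi0⟩ : ∃ i0 : Fin N, (i0 : ℕ) = 0 := ⟨⟨0, hN0⟩, rfl⟩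
  constructor
  · -- existence
    by_contra hcon
    push_neg at hcon
    obtain ⟨p, hp⟩ : ∃ p : Fin N, (p : ℕ) = ν - 1 := ⟨⟨ν - 1, by omega⟩, rfl⟩
    obtain ⟨q, hq⟩ : ∃ q : Fin N, (q : ℕ) = ν := ⟨⟨ν, by omega⟩, rfl⟩
    have hconst : ∀ k : Fin N, 1 ≤ (k : ℕ) → ω k = ω q := by
      intro k hk
      by_cases hkv : (k : ℕ) < ν
      · exact le_antisymm (hcon k q hk hkv (by omega)) (hord k q (by rw [Fin.le_def]; omega))
      · have h1 : ω k ≤ ω p := hord p k (by rw [Fin.le_def]; omega)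
        have h2 : ω p ≤ ω k := hcon p k (by omega) (by omega) (by omega)
        have h3 : ω p ≤ ω q := hcon p q (by omega) (by omega) (by omega)
        have h4 : ω q ≤ ω p := hord p q (by rw [Fin.le_def]; omega)
        linarith
    have hsplit : ω i0 + ∑ k ∈ univ.erase i0, ω k = 1 := by
      rw [Finset.add_sum_erase _ _ (Finset.mem_univ i0), hsum]
    have herase : ∑ k ∈ univ.erase i0, ω k = (N - 1 : ℝ) * ω q := by
      have hcc : ∀ k ∈ univ.erase i0, ω k = ω q := by
        intro k hk
        rw [Finset.mem_erase] at hk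
        refine hconst k ?_
        have := hk.1
        rw [Fin.ne_iff_vne, hi0] at this
        omega
      rw [Finset.sum_congr rfl hcc, Finset.sum_const, Finset.card_erase_of_mem
        (Finset.mem_univ i0), Finset.card_univ, Fintype.card_fin, nsmul_eq_mul,
        Nat.cast_sub (by omega : 1 ≤ N), Nat.cast_one]
    have htot : ω i0 + (N - 1 : ℝ) * ω q = 1 := by rw [← herase]; exact hsplit
    have hc0 : 0 ≤ ω q := hnn q
    have hci0 : ω q ≤ ω i0 := hord i0 q (by rw [Fin.le_def]; omega)
    have hN1 : (1:ℝ) ≤ (N:ℝ) := by exact_mod_cast (by omega : 1 ≤ N)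
    apply hseg
    refine ⟨1 - N * ω q, N * ω q, by nlinarith [hN1, hci0, hc0, htot],
      by positivity, by ring, ?_⟩
    funext k
    simp only [Pi.add_apply, Pi.smul_apply, smul_eq_mul, hb1 k, hbN k]
    have hNne : (N : ℝ) ≠ 0 := by positivity
    by_cases hk : (k : ℕ) = 0
    · have hki : k = i0 := Fin.ext (by omega)
      rw [if_pos hk, hki]
      field_simp
      linarith [htot]
    · rw [if_neg hk]
      have hkc : ω k = ω q := hconst k (by omega)
      field_simp
      linarith [hkc]
  · intro i j hi1 hiν hνj hij t ht x hx
    have e0 : (⟨0, by omega⟩ : Fin N) = i0 := Fin.ext (by simp [hi0])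
    rw [e0] at ht ⊢
    have hine : i ≠ j := by rw [Fin.ne_iff_vne]; omega
    have h0i : i0 ≠ i := by rw [Fin.ne_iff_vne]; omega
    have h0j : i0 ≠ j := by rw [Fin.ne_iff_vne]; omega
    have hd : 0 < ω i - ω j := sub_pos.mpr hij
    have hi0le : ω i ≤ ω i0 := hord i0 i (by rw [Fin.le_def]; omega)
    have ht1 : t ≤ -1 := by
      rw [ht, div_le_iff₀ hd]; linarith
    have hxdec : ∀ k : Fin N, x k = (if k = i0 then (1:ℝ) else 0) +
        (if k = i then t else 0) + (if k = j then -(1 + t) else 0) := by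
      intro k
      rw [hx k]
      by_cases hk0 : k = i0
      · subst hk0
        rw [if_pos hi0, if_pos rfl, if_neg h0i, if_neg h0j]
        ring
      · have hkn : ¬((k : ℕ) = 0) := fun h => hk0 (Fin.ext (by omega))
        rw [if_neg hkn, if_neg hk0]
        by_cases hki : k = i
        · subst hki
          rw [if_pos rfl, if_pos rfl, if_neg hine]
          ring
        · rw [if_neg hki, if_neg hki]
          by_cases hkj : k = j
          · subst hkj
            rw [if_pos rfl]
            ring
          · rw [if_neg hkj]
            ring
    have hsum0 : (∑ k, x k) = 0 := by
      simp only [hxdec, Finset.sum_add_distrib, Finset.sum_ite_eq', Finset.mem_univ, if_pos]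
      ring
    have hfilt : (∑ k ∈ univ.filter (fun k : Fin N => (k : ℕ) < ν), x k) = 1 + t := by
      simp only [hxdec, Finset.sum_add_distrib, Finset.sum_ite_eq', Finset.mem_filter,
        Finset.mem_univ, true_and]
      rw [if_pos (by omega : (i0:ℕ) < ν), if_pos hiν, if_neg (by omega : ¬((j:ℕ) < ν))]
      ring
    have hinner : (∑ k, ω k * x k) = ω i0 + t * ω i - (1 + t) * ω j := by
      simp only [hxdec, mul_add, mul_ite, mul_zero, mul_one, Finset.sum_add_distrib,
        Finset.sum_ite_eq', Finset.mem_univ, if_pos]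
      ring
    have hinner0 : (∑ k, ω k * x k) = 0 := by
      rw [hinner, ht]
      field_simp
      ring
    refine ⟨ht1, hsum0, hfilt, by linarith, hinner, by rw [hinner0], ?_⟩
    intro ε hε
    apply Real.sqrt_le_sqrt
    have hexp : ∑ k, (ω k + ε * x k)^2 =
        (∑ k, ω k ^ 2) + 2 * ε * (∑ k, ω k * x k) + ε ^ 2 * (∑ k, x k ^ 2) := by
      rw [Finset.mul_sum, Finset.mul_sum, ← Finset.sum_add_distrib, ← Finset.sum_add_distrib]
      exact Finset.sum_congr rfl (fun k _ => by ring)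
    have hx2 : 0 ≤ ∑ k, x k ^ 2 := Finset.sum_nonneg (fun k _ => sq_nonneg _)
    rw [hexp, hinner0]
    nlinarith
end
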